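/- arXiv:1403.4094 — 3 statements merged into one kernel-verified Lean document; each statement's English description precedes it below -/
import Mathlib

section
/- Let C be a monoidal category equipped with a symmetry γ (a natural family of isomorphisms γ_{A,B} : A ⊗ B ⟶ B ⊗ A satisfying the hexagon coherence conditions and γ_{B,A} ∘ γ_{A,B} = id_{A⊗B}) and, for every object A, with morphisms δ_A : A ⟶ A ⊗ A and ε_A : A ⟶ 𝟙 making (A, δ_A, ε_A) a cocommutative comonoid (coassociativity: δ_A ≫ (δ_A ⊗ id_A) ≫ α_{A,A,A} = δ_A ≫ (id_A ⊗ δ_A); counitality: δ_A ≫ (ε_A ⊗ id_A) ≫ λ_A = id_A = δ_A ≫ (id_A ⊗ ε_A) ≫ ρ_A; cocommutativity: δ_A ≫ γ_{A,A} = δ_A) which is natural in A (for every morphism f : A ⟶ B one has f ≫ δ_B = δ_A ≫ (f ⊗ f) and f ≫ ε_B = ε_A). Then the unit object 𝟙 is a terminal object of C: for every object A, ε_A is the unique morphism A ⟶ 𝟙. -/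
/-!
Naturality of `ε` along `ε_𝟙` makes `ε_𝟙` idempotent, and the left counit law at `𝟙` makes it a
split epimorphism, so `ε_𝟙 = 𝟙`. Naturality along any `f : A ⟶ 𝟙` then gives `f = f ≫ ε_𝟙 = ε_A`.
-/

open CategoryTheory CategoryTheory.MonoidalCategory

namespace CategoryTheory.MonoidalCategory

variable {C : Type*} [Category C] [MonoidalCategory C]

theorem tensorHom_id_comp_leftUnitor_unit (e : 𝟙_ C ⟶ 𝟙_ C) :
    (e ⊗ₘ 𝟙 (𝟙_ C)) ≫ (λ_ (𝟙_ C)).hom = (λ_ (𝟙_ C)).hom ≫ e := by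
  rw [tensorHom_id, unitors_equal, rightUnitor_naturality]

theorem isSplitEpi_of_counit_left_unit {δ : 𝟙_ C ⟶ 𝟙_ C ⊗ 𝟙_ C} {e : 𝟙_ C ⟶ 𝟙_ C}
    (h : δ ≫ (e ⊗ₘ 𝟙 (𝟙_ C)) ≫ (λ_ (𝟙_ C)).hom = 𝟙 (𝟙_ C)) : IsSplitEpi e :=
  .mk' ⟨δ ≫ (λ_ (𝟙_ C)).hom, by rwa [Category.assoc, ← tensorHom_id_comp_leftUnitor_unit]⟩

end CategoryTheory.MonoidalCategory

theorem unit_terminal_of_natural_comonoid_general {C : Type*} [Category C] [MonoidalCategory C]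
    -- the natural cocommutative comonoid structure
    (δ : ∀ A : C, A ⟶ A ⊗ A) (ε : ∀ A : C, A ⟶ 𝟙_ C)
    (counit_left : ∀ A : C, δ A ≫ (ε A ⊗ₘ 𝟙 A) ≫ (λ_ A).hom = 𝟙 A)
    (ε_natural : ∀ {A B : C} (f : A ⟶ B), f ≫ ε B = ε A) :
    ∀ (A : C) (f : A ⟶ 𝟙_ C), f = ε A := by
  have hε_unit : ε (𝟙_ C) = 𝟙 (𝟙_ C) :=
    haveI := isSplitEpi_of_counit_left_unit (counit_left (𝟙_ C))
    (cancel_epi_id (ε (𝟙_ C))).mp (ε_natural (ε (𝟙_ C)))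
  intro A f
  rw [← ε_natural f, hε_unit, Category.comp_id]

/-- If a monoidal category is equipped with a symmetry `γ` and every object `A` carries a
cocommutative comonoid structure `(δ_A, ε_A)` which is natural in `A`, then the unit
object `𝟙_ C` is terminal: `ε_A` is the unique morphism `A ⟶ 𝟙_ C`. -/
theorem unit_terminal_of_natural_comonoid {C : Type*} [Category C] [MonoidalCategory C]
    -- the symmetry
    (γ : ∀ A B : C, A ⊗ B ≅ B ⊗ A)
    (γ_natural : ∀ {A A' B B' : C} (f : A ⟶ A') (g : B ⟶ B'),
      (f ⊗ₘ g) ≫ (γ A' B').hom = (γ A B).hom ≫ (g ⊗ₘ f))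
    (hexagon_forward : ∀ A B D : C,
      (α_ A B D).hom ≫ (γ A (B ⊗ D)).hom ≫ (α_ B D A).hom =
        ((γ A B).hom ▷ D) ≫ (α_ B A D).hom ≫ (B ◁ (γ A D).hom))
    (hexagon_reverse : ∀ A B D : C,
      (α_ A B D).inv ≫ (γ (A ⊗ B) D).hom ≫ (α_ D A B).inv =
        (A ◁ (γ B D).hom) ≫ (α_ A D B).inv ≫ ((γ A D).hom ▷ B))
    (symmetry : ∀ A B : C, (γ A B).hom ≫ (γ B A).hom = 𝟙 (A ⊗ B))
    -- the natural cocommutative comonoid structure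
    (δ : ∀ A : C, A ⟶ A ⊗ A) (ε : ∀ A : C, A ⟶ 𝟙_ C)
    (coassoc : ∀ A : C, δ A ≫ (δ A ⊗ₘ 𝟙 A) ≫ (α_ A A A).hom = δ A ≫ (𝟙 A ⊗ₘ δ A))
    (counit_left : ∀ A : C, δ A ≫ (ε A ⊗ₘ 𝟙 A) ≫ (λ_ A).hom = 𝟙 A)
    (counit_right : ∀ A : C, δ A ≫ (𝟙 A ⊗ₘ ε A) ≫ (ρ_ A).hom = 𝟙 A)
    (cocomm : ∀ A : C, δ A ≫ (γ A A).hom = δ A)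
    (δ_natural : ∀ {A B : C} (f : A ⟶ B), f ≫ δ B = δ A ≫ (f ⊗ₘ f))
    (ε_natural : ∀ {A B : C} (f : A ⟶ B), f ≫ ε B = ε A) :
    ∀ (A : C) (f : A ⟶ 𝟙_ C), f = ε A :=
  unit_terminal_of_natural_comonoid_general δ ε counit_left ε_natural
end

section
/- For every n ≥ 1, the group presented by generators σ₁, …, σ_{n-1} subject to the relations σᵢσᵢ₊₁σᵢ = σᵢ₊₁σᵢσᵢ₊₁ (for 1 ≤ i ≤ n−2), σᵢ² = 1 (for 1 ≤ i ≤ n−1), and σᵢσⱼ = σⱼσᵢ (for all i, j with |i − j| ≥ 2) is isomorphic to the symmetric group on n elements. Concretely, with rels ⊆ FreeGroup (Fin (n-1)) the set of words σᵢσᵢ₊₁σᵢσᵢ₊₁⁻¹σᵢ⁻¹σᵢ₊₁⁻¹, σᵢ², and σᵢσⱼσᵢ⁻¹σⱼ⁻¹ for |i − j| ≥ 2, the presented group PresentedGroup rels is isomorphic (as a group) to Equiv.Perm (Fin n), under the isomorphism sending σᵢ to the transposition of i−1 and i. -/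
/-- The relations of the standard presentation of the symmetric group on `n` letters by
the elementary transpositions `σ₁, …, σ_{n-1}` (here indexed by `Fin (n-1)`):
braid relations, squares, and far commutations. -/
def symmetricGroupRels (n : ℕ) : Set (FreeGroup (Fin (n - 1))) :=
  {x | ∃ i j : Fin (n - 1), (j : ℕ) = (i : ℕ) + 1 ∧
    x = FreeGroup.of i * FreeGroup.of j * FreeGroup.of i *
      (FreeGroup.of j)⁻¹ * (FreeGroup.of i)⁻¹ * (FreeGroup.of j)⁻¹} ∪
  {x | ∃ i : Fin (n - 1), x = FreeGroup.of i * FreeGroup.of i} ∪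
  {x | ∃ i j : Fin (n - 1), ((i : ℕ) + 2 ≤ (j : ℕ) ∨ (j : ℕ) + 2 ≤ (i : ℕ)) ∧
    x = FreeGroup.of i * FreeGroup.of j * (FreeGroup.of i)⁻¹ * (FreeGroup.of j)⁻¹}

/-!
Sending `σᵢ` to the transposition `(i-1 i)` respects the relations, and the adjacent
transpositions generate `𝔖ₙ`, so the presented group surjects onto `𝔖ₙ`; it remains to see
that it has at most `n!` elements. Let `Hₖ` be the subgroup generated by `σ₁, …, σₖ`. Every
right coset of `Hₖ` in `Hₖ₊₁` contains one of the `k + 2` descending words `σₖ₊₁ σₖ ⋯ σⱼ`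
(`1 ≤ j ≤ k + 2`, the last one empty): right multiplication by a generator lengthens or
shortens such a word, or, by the far commutations and the braid relation, moves past it at
the cost of a generator of `Hₖ` on the left. Hence `|Hₖ₊₁| ≤ (k + 2) |Hₖ|`.
-/

lemma braid_word_eq_one_iff {G : Type*} [Group G] {x y : G} :
    x * y * x * y⁻¹ * x⁻¹ * y⁻¹ = 1 ↔ x * y * x = y * x * y := by
  rw [show x * y * x * y⁻¹ * x⁻¹ * y⁻¹ = x * y * x * (y * x * y)⁻¹ by group, mul_inv_eq_one]

lemma Equiv.swap_braid {α : Type*} [DecidableEq α] {a b c : α} (hab : a ≠ b) (hbc : b ≠ c)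
    (hac : a ≠ c) :
    swap a b * swap b c * swap a b = swap b c * swap a b * swap b c := by
  rw [swap_mul_swap_mul_swap hab hac, swap_comm b c, swap_comm a b,
    swap_mul_swap_mul_swap hbc.symm (Ne.symm hac), swap_comm]

/-- The Coxeter relations of type `A_N` among `s 0, …, s (N - 1)`. -/
structure TypeARelations {G : Type*} [Group G] (s : ℕ → G) (N : ℕ) : Prop where
  mul_self : ∀ k < N, s k * s k = 1
  braid : ∀ k, k + 1 < N → s k * s (k + 1) * s k = s (k + 1) * s k * s (k + 1)
  comm : ∀ k l, k + 2 ≤ l → l < N → s k * s l = s l * s k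

namespace TypeARelations

variable {G : Type*} [Group G] {s : ℕ → G} {N : ℕ}

/-- `descProd s j d = s (j + d - 1) * ⋯ * s (j + 1) * s j`. -/
def descProd (s : ℕ → G) : ℕ → ℕ → G
  | _, 0 => 1
  | j, d + 1 => descProd s (j + 1) d * s j

def parabolic (s : ℕ → G) (k : ℕ) : Subgroup G :=
  Subgroup.closure (s '' Set.Iio k)

lemma mem_parabolic {i k : ℕ} (h : i < k) : s i ∈ parabolic s k :=
  Subgroup.subset_closure ⟨i, h, rfl⟩

lemma descProd_mul_comm (hs : TypeARelations s N) {i j d : ℕ} (hij : i + 2 ≤ j)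
    (hjd : j + d ≤ N) : descProd s j d * s i = s i * descProd s j d := by
  induction d generalizing j with
  | zero => simp [descProd]
  | succ d ih =>
    rw [descProd, mul_assoc, ← hs.comm i j hij (by omega), ← mul_assoc, ih (by omega) (by omega),
      mul_assoc]

lemma descProd_mul_of_lt (hs : TypeARelations s N) {i j d : ℕ} (hji : j < i) (hid : i < j + d)
    (hjd : j + d ≤ N) : descProd s j d * s i = s (i - 1) * descProd s j d := by
  induction d generalizing j with
  | zero => omega
  | succ d ih =>
    by_cases hi : i = j + 1
    · subst hi
      obtain ⟨d, rfl⟩ : ∃ e, d = e + 1 := ⟨d - 1, by omega⟩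
      calc descProd s (j + 2) d * s (j + 1) * s j * s (j + 1)
          = descProd s (j + 2) d * (s (j + 1) * s j * s (j + 1)) := by group
        _ = descProd s (j + 2) d * s j * (s (j + 1) * s j) := by
            rw [← hs.braid j (by omega)]; group
        _ = s j * (descProd s (j + 2) d * s (j + 1) * s j) := by
            rw [descProd_mul_comm hs le_rfl (by omega)]; group
    · rw [descProd, mul_assoc, hs.comm j i (by omega) (by omega), ← mul_assoc,
        ih (by omega) (by omega) (by omega), mul_assoc]

lemma descProd_mul_mem (hs : TypeARelations s N) {i j k : ℕ} (hkN : k < N) (hik : i ≤ k)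
    (hj : j ≤ k + 1) :
    ∃ y ∈ parabolic s k, ∃ j' ≤ k + 1,
      descProd s j (k + 1 - j) * s i = y * descProd s j' (k + 1 - j') := by
  rcases lt_trichotomy (i + 1) j with hij | rfl | hji
  · exact ⟨s i, mem_parabolic (by omega), j, hj, descProd_mul_comm hs hij (by omega)⟩
  · refine ⟨1, one_mem _, i, by omega, ?_⟩
    rw [one_mul, show k + 1 - i = k + 1 - (i + 1) + 1 by omega, descProd]
  · rcases (Nat.le_of_lt_succ hji).eq_or_lt with rfl | hji
    · refine ⟨1, one_mem _, j + 1, by omega, ?_⟩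
      rw [one_mul, show k + 1 - j = k + 1 - (j + 1) + 1 by omega, descProd, mul_assoc,
        hs.mul_self j (by omega), mul_one]
    · exact ⟨s (i - 1), mem_parabolic (by omega), j, hj,
        descProd_mul_of_lt hs hji (by omega) (by omega)⟩

lemma exists_mem_parabolic_mul_descProd (hs : TypeARelations s N) {k : ℕ} (hkN : k < N)
    {x : G} (hx : x ∈ parabolic s (k + 1)) :
    ∃ y ∈ parabolic s k, ∃ j ≤ k + 1, x = y * descProd s j (k + 1 - j) := by
  have step : ∀ x i, i < k + 1 → (∃ y ∈ parabolic s k, ∃ j ≤ k + 1,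
      x = y * descProd s j (k + 1 - j)) →
      ∃ y ∈ parabolic s k, ∃ j ≤ k + 1, x * s i = y * descProd s j (k + 1 - j) := by
    rintro x i hi ⟨y, hy, j, hj, rfl⟩
    obtain ⟨y', hy', j', hj', h⟩ := descProd_mul_mem hs hkN (Nat.le_of_lt_succ hi) hj
    exact ⟨y * y', mul_mem hy hy', j', hj', by rw [mul_assoc, h, mul_assoc]⟩
  induction hx using Subgroup.closure_induction_right with
  | one => exact ⟨1, one_mem _, k + 1, le_rfl, by simp [descProd]⟩
  | mul_right x _ _ hi ih =>
    obtain ⟨i, hi, rfl⟩ := hi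
    exact step x i hi ih
  | mul_inv_cancel x _ _ hi ih =>
    obtain ⟨i, hi, rfl⟩ := hi
    rw [inv_eq_of_mul_eq_one_right (hs.mul_self i (Nat.lt_of_lt_of_le hi hkN))]
    exact step x i hi ih

lemma finite_parabolic_and_card_le (hs : TypeARelations s N) {k : ℕ} (hkN : k ≤ N) :
    Finite (parabolic s k) ∧ Nat.card (parabolic s k) ≤ (k + 1).factorial := by
  induction k with
  | zero =>
    rw [show parabolic s 0 = ⊥ by simp [parabolic]]
    exact ⟨inferInstance, by simp⟩
  | succ k ih =>
    obtain ⟨hfin, hcard⟩ := ih (by omega)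
    let f : parabolic s k × Fin (k + 2) → G := fun p => p.1 * descProd s p.2 (k + 1 - p.2)
    have hsub : (parabolic s (k + 1) : Set G) ⊆ Set.range f := by
      intro x hx
      obtain ⟨y, hy, j, hj, rfl⟩ := exists_mem_parabolic_mul_descProd hs (by omega) hx
      exact ⟨(⟨y, hy⟩, ⟨j, by omega⟩), rfl⟩
    refine ⟨(Set.finite_range f).subset hsub, ?_⟩
    calc Nat.card (parabolic s (k + 1))
        ≤ Nat.card (Set.range f) := Nat.card_mono (Set.finite_range f) hsub
      _ ≤ Nat.card (parabolic s k × Fin (k + 2)) := Finite.card_range_le f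
      _ = Nat.card (parabolic s k) * (k + 2) := by simp
      _ ≤ (k + 2).factorial := by rw [Nat.factorial_succ (k + 1), mul_comm]; gcongr

lemma lift_eq_one {n : ℕ} (hs : TypeARelations s (n - 1)) :
    ∀ r ∈ symmetricGroupRels n, FreeGroup.lift (fun i : Fin (n - 1) => s i) r = 1 := by
  rintro r ((⟨i, j, hij, rfl⟩ | ⟨i, rfl⟩) | ⟨i, j, hij, rfl⟩) <;>
    simp only [map_mul, map_inv, FreeGroup.lift_apply_of]
  · rw [braid_word_eq_one_iff, hij]
    exact hs.braid i (by omega)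
  · exact hs.mul_self i i.isLt
  · rw [← commutatorElement_def, commutatorElement_eq_one_iff_mul_comm]
    rcases hij with h | h
    · exact hs.comm i j h j.isLt
    · exact (hs.comm j i h i.isLt).symm

end TypeARelations

open TypeARelations

namespace SymmetricGroupPresentation

/-- The paper's `σₖ₊₁`, with the junk value `1` for `k ≥ n - 1`. -/
noncomputable def gen (n k : ℕ) : PresentedGroup (symmetricGroupRels n) :=
  if h : k < n - 1 then PresentedGroup.of ⟨k, h⟩ else 1

lemma gen_of_lt {n k : ℕ} (h : k < n - 1) : gen n k = PresentedGroup.of ⟨k, h⟩ := dif_pos h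

lemma typeARelations_gen (n : ℕ) : TypeARelations (gen n) (n - 1) where
  mul_self k hk := by
    rw [gen_of_lt hk]
    exact PresentedGroup.one_of_mem (Or.inl (Or.inr ⟨_, rfl⟩))
  braid k hk := by
    rw [gen_of_lt hk, gen_of_lt (by omega), ← braid_word_eq_one_iff]
    exact PresentedGroup.one_of_mem (Or.inl (Or.inl ⟨⟨k, by omega⟩, ⟨k + 1, hk⟩, rfl, rfl⟩))
  comm k l hkl hl := by
    rw [gen_of_lt hl, gen_of_lt (by omega), ← commutatorElement_eq_one_iff_mul_comm]
    exact PresentedGroup.one_of_mem (Or.inr ⟨⟨k, by omega⟩, ⟨l, hl⟩, Or.inl hkl, rfl⟩)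

lemma parabolic_gen_eq_top (n : ℕ) : parabolic (gen n) (n - 1) = ⊤ := by
  rw [eq_top_iff, ← PresentedGroup.closure_range_of, parabolic, Subgroup.closure_le]
  rintro _ ⟨i, rfl⟩
  exact Subgroup.subset_closure ⟨i, i.isLt, gen_of_lt i.isLt⟩

lemma finite_and_card_le (n : ℕ) :
    Finite (PresentedGroup (symmetricGroupRels n)) ∧
      Nat.card (PresentedGroup (symmetricGroupRels n)) ≤ n.factorial := by
  obtain ⟨hfin, hcard⟩ := (typeARelations_gen n).finite_parabolic_and_card_le le_rfl
  rw [parabolic_gen_eq_top] at hfin hcard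
  refine ⟨Finite.of_equiv _ Subgroup.topEquiv.toEquiv, ?_⟩
  rw [Subgroup.card_top] at hcard
  rcases n with _ | n <;> simpa using hcard

def adjSwap (n k : ℕ) : Equiv.Perm (Fin n) :=
  if h : k + 1 < n then Equiv.swap ⟨k, by omega⟩ ⟨k + 1, h⟩ else 1

lemma typeARelations_adjSwap (n : ℕ) : TypeARelations (adjSwap n) (n - 1) where
  mul_self k hk := by
    rw [adjSwap, dif_pos (by omega), Equiv.swap_mul_self]
  braid k hk := by
    rw [adjSwap, adjSwap, dif_pos (by omega), dif_pos (by omega)]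
    exact Equiv.swap_braid (by simp) (by simp) (by simp only [ne_eq, Fin.mk.injEq]; omega)
  comm k l hkl hl := by
    rw [adjSwap, adjSwap, dif_pos (by omega), dif_pos (by omega)]
    refine (Equiv.Perm.disjoint_swap_swap ?_).commute
    grind [Fin.ext_iff]

noncomputable def swapHom (n : ℕ) :
    PresentedGroup (symmetricGroupRels n) →* Equiv.Perm (Fin n) :=
  PresentedGroup.toGroup (typeARelations_adjSwap n).lift_eq_one

lemma swapHom_of {n : ℕ} (i : Fin (n - 1)) :
    swapHom n (PresentedGroup.of i) = Equiv.swap ⟨i, by omega⟩ ⟨i + 1, by omega⟩ := by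
  rw [swapHom, PresentedGroup.toGroup.of, adjSwap, dif_pos (by omega)]

lemma swapHom_surjective (n : ℕ) : Function.Surjective (swapHom n) := by
  rcases n with _ | m
  · exact fun _ => ⟨1, Subsingleton.elim _ _⟩
  rw [← MonoidHom.range_eq_top, eq_top_iff,
    ← Subgroup.closure_eq_top_of_mclosure_eq_top (Equiv.Perm.mclosure_swap_castSucc_succ m),
    Subgroup.closure_le]
  rintro _ ⟨i, rfl⟩
  exact ⟨PresentedGroup.of i, swapHom_of (n := m + 1) i⟩

end SymmetricGroupPresentation

open SymmetricGroupPresentation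

/-- For every `n ≥ 1`, the group presented by generators `σ₁, …, σ_{n-1}` subject to the
braid relations, `σᵢ² = 1` and the far commutations is isomorphic to the symmetric group
on `n` elements, via an isomorphism sending each generator to the corresponding
elementary transposition. -/
theorem presentedGroup_symmetricGroup_iso (n : ℕ) :
    ∃ e : PresentedGroup (symmetricGroupRels n) ≃* Equiv.Perm (Fin n),
      ∀ i : Fin (n - 1),
        e (PresentedGroup.of i) =
          Equiv.swap (⟨(i : ℕ), by have := i.isLt; omega⟩ : Fin n)
            (⟨(i : ℕ) + 1, by have := i.isLt; omega⟩ : Fin n) := by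
  obtain ⟨hfin, hcard⟩ := finite_and_card_le n
  have hbij : Function.Bijective (swapHom n) :=
    (swapHom_surjective n).bijective_of_nat_card_le (by simpa [Fintype.card_perm] using hcard)
  exact ⟨MulEquiv.ofBijective _ hbij, swapHom_of⟩
end

section
/- The string rewriting system with rules ba ⇒ ab and bb ⇒ 1 is confluent: writing Rw* for the reflexive-transitive closure of the one-step rewriting relation Rw, whenever Rw* u v₁ and Rw* u v₂ hold, there exists a word w with Rw* v₁ w and Rw* v₂ w. -/
/-- One-step rewriting relation of the string rewriting system with rules
`ba ⇒ ab` and `bb ⇒ 1`, on words over the alphabet `{a, b}` encoded as `List Bool`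
with `a = false` and `b = true`. -/
def Rw (u v : List Bool) : Prop :=
  ∃ w₁ w₂ : List Bool,
    (u = w₁ ++ [true, false] ++ w₂ ∧ v = w₁ ++ [false, true] ++ w₂) ∨
    (u = w₁ ++ [true, true] ++ w₂ ∧ v = w₁ ++ w₂)

/-!
Both rules preserve the number of `a`s and the parity of the number of `b`s, and every word
`u` rewrites to `a^(|u|_a) b^(|u|_b mod 2)`: push each `b` to the right past the `a`s and cancel
the `b`s in pairs. This normal form is thus shared by all reducts of `u`.
-/

open Relation

theorem Relation.join_of_reflTransGen_normalForm {α : Type*} {r : α → α → Prop} (nf : α → α)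
    (reduces : ∀ a, ReflTransGen r a (nf a)) (invariant : ∀ a b, r a b → nf a = nf b)
    {a b c : α} (hab : ReflTransGen r a b) (hac : ReflTransGen r a c) :
    Join (ReflTransGen r) b c := by
  have nf_eq {x y : α} (h : ReflTransGen r x y) : nf x = nf y := by
    induction h with
    | refl => rfl
    | tail _ hyz ih => exact ih.trans (invariant _ _ hyz)
  exact ⟨nf a, nf_eq hab ▸ reduces b, nf_eq hac ▸ reduces c⟩

namespace Rw

def normalForm (u : List Bool) : List Bool :=
  List.replicate (u.count false) false ++ List.replicate (u.count true % 2) true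

theorem normalForm_eq {u v : List Bool} (h : Rw u v) : normalForm u = normalForm v := by
  obtain ⟨w₁, w₂, ⟨rfl, rfl⟩ | ⟨rfl, rfl⟩⟩ := h
  · simp [normalForm]
  · simp only [normalForm, List.count_append, List.count_cons, List.count_nil]
    grind

theorem append_left {u v : List Bool} (c : List Bool) (h : Rw u v) : Rw (c ++ u) (c ++ v) := by
  obtain ⟨w₁, w₂, ⟨rfl, rfl⟩ | ⟨rfl, rfl⟩⟩ := h
  · exact ⟨c ++ w₁, w₂, .inl ⟨by simp, by simp⟩⟩
  · exact ⟨c ++ w₁, w₂, .inr ⟨by simp, by simp⟩⟩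

theorem reflTransGen_append_left {u v : List Bool} (c : List Bool)
    (h : ReflTransGen Rw u v) : ReflTransGen Rw (c ++ u) (c ++ v) :=
  h.lift (c ++ ·) fun _ _ => append_left c

theorem reflTransGen_cons {u v : List Bool} (x : Bool)
    (h : ReflTransGen Rw u v) : ReflTransGen Rw (x :: u) (x :: v) :=
  reflTransGen_append_left [x] h

theorem reflTransGen_true_cons_replicate_false (m : ℕ) (s : List Bool) :
    ReflTransGen Rw (true :: (List.replicate m false ++ s)) (List.replicate m false ++ true :: s) := by
  induction m with
  | zero => rfl
  | succ m ih =>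
    have swap : Rw (true :: false :: (List.replicate m false ++ s))
        (false :: true :: (List.replicate m false ++ s)) :=
      ⟨[], _, .inl ⟨rfl, rfl⟩⟩
    exact .head swap (reflTransGen_cons false ih)

theorem reflTransGen_true_cons_replicate_true (k : ℕ) :
    ReflTransGen Rw (true :: List.replicate (k % 2) true) (List.replicate ((k + 1) % 2) true) := by
  rcases Nat.mod_two_eq_zero_or_one k with hk | hk
  · rw [hk, show (k + 1) % 2 = 1 by omega]
    rfl
  · rw [hk, show (k + 1) % 2 = 0 by omega]
    exact .single ⟨[], [], .inr ⟨rfl, rfl⟩⟩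

theorem reflTransGen_normalForm (u : List Bool) : ReflTransGen Rw u (normalForm u) := by
  induction u with
  | nil => rfl
  | cons x t ih =>
    refine (reflTransGen_cons x ih).trans ?_
    cases x
    · rw [show normalForm (false :: t) = false :: normalForm t by
        simp [normalForm, List.replicate_succ]]
    · rw [normalForm, normalForm, List.count_cons_self, List.count_cons_of_ne (by decide)]
      exact (reflTransGen_true_cons_replicate_false _ _).trans
        (reflTransGen_append_left _ (reflTransGen_true_cons_replicate_true _))

end Rw

/-- The string rewriting system with rules `ba ⇒ ab` and `bb ⇒ 1` is confluent. -/
theorem rw_confluent :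
    ∀ u v₁ v₂ : List Bool, Relation.ReflTransGen Rw u v₁ → Relation.ReflTransGen Rw u v₂ →
      ∃ w : List Bool, Relation.ReflTransGen Rw v₁ w ∧ Relation.ReflTransGen Rw v₂ w :=
  fun _ _ _ => join_of_reflTransGen_normalForm Rw.normalForm Rw.reflTransGen_normalForm
    fun _ _ => Rw.normalForm_eq
end
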